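/- arXiv:math/0606577 — 2 statements merged into one kernel-verified Lean document; each statement's English description precedes it below -/
import Mathlib

section
/- Let k be a positive integer and let r = R(k,k) be the Ramsey number, i.e., the least integer such that every simple graph on r vertices contains a clique of size k or an independent set of size k. Then every connected finite simple graph G that has a minor isomorphic to the star K_{1,r} contains a parallel minor isomorphic to K_{1,k} or to the complete graph K_k. -/
open SimpleGraph

/-- `H` is (isomorphic to) a parallel minor of `G`: `H` is obtained from `G` by contracting
edges and then deleting all resulting loops and parallel edges.  The map `f` sends each vertex
of `G` to the vertex of `H` it gets contracted onto; each fibre must induce a connected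
subgraph of `G`, and adjacency in `H` is exactly inherited adjacency between distinct fibres. -/
def HasParallelMinor {V W : Type} (G : SimpleGraph V) (H : SimpleGraph W) : Prop :=
  ∃ f : V → W, Function.Surjective f ∧
    (∀ w : W, (G.induce (f ⁻¹' {w})).Connected) ∧
    ∀ w₁ w₂ : W, H.Adj w₁ w₂ ↔ w₁ ≠ w₂ ∧ ∃ v₁ v₂ : V, f v₁ = w₁ ∧ f v₂ = w₂ ∧ G.Adj v₁ v₂

/-- `G` contains a subgraph isomorphic to `H`. -/
def ContainsSubgraph {V W : Type} (G : SimpleGraph V) (H : SimpleGraph W) : Prop :=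
  ∃ f : W ↪ V, ∀ a b : W, H.Adj a b → G.Adj (f a) (f b)

/-- `H` is (isomorphic to) a minor of `G`: a subgraph of a parallel minor of `G`. -/
def HasMinor {V W : Type} (G : SimpleGraph V) (H : SimpleGraph W) : Prop :=
  ∃ (n : ℕ) (M : SimpleGraph (Fin n)), HasParallelMinor G M ∧ ContainsSubgraph M H

/-- A graph is `k`-connected if it has more than `k` vertices and deleting any fewer than `k`
vertices leaves it connected. -/
def KConnected {V : Type} [Fintype V] (k : ℕ) (G : SimpleGraph V) : Prop :=
  k < Fintype.card V ∧ ∀ S : Set V, S.ncard < k → (G.induce Sᶜ).Connected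

/-- A graph is internally 4-connected if it is 3-connected and for every separating set `S` of
3 vertices, `G - S` has exactly two components, one of which is a single vertex. -/
def InternallyFourConnected {V : Type} [Fintype V] (G : SimpleGraph V) : Prop :=
  KConnected 3 G ∧ ∀ S : Set V, S.ncard = 3 → ¬ (G.induce Sᶜ).Connected →
    ∃ v ∈ Sᶜ, (∀ u : V, G.Adj v u → u ∈ S) ∧ (G.induce (Sᶜ \ {v})).Connected

/-- The join of two graphs: disjoint union plus all edges between the two sides. -/
def graphJoin {V W : Type} (G : SimpleGraph V) (H : SimpleGraph W) : SimpleGraph (V ⊕ W) where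
  Adj x y := match x, y with
    | Sum.inl a, Sum.inl b => G.Adj a b
    | Sum.inr a, Sum.inr b => H.Adj a b
    | _, _ => True
  symm := ⟨by rintro (a | a) (b | b) h <;> first | exact G.adj_symm h | exact H.adj_symm h | trivial⟩
  loopless := ⟨by rintro (a | a) h <;> first | exact G.irrefl h | exact H.irrefl h⟩

/-- `K'_{m,k}`: the complete bipartite graph `K_{m,k}` with all edges added among the `m`
vertices of degree `k`. -/
def KPrime (m k : ℕ) : SimpleGraph (Fin m ⊕ Fin k) :=
  graphJoin (⊤ : SimpleGraph (Fin m)) (⊥ : SimpleGraph (Fin k))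

/-- The fan `F_k`: a path on `k` vertices joined to one new vertex. -/
def fanGraph (k : ℕ) : SimpleGraph (Fin k ⊕ Fin 1) :=
  graphJoin (SimpleGraph.pathGraph k) (⊤ : SimpleGraph (Fin 1))

/-- The wheel `W_k`: a cycle on `k` vertices joined to one new vertex (the hub). -/
def wheelGraph (k : ℕ) : SimpleGraph (Fin k ⊕ Fin 1) :=
  graphJoin (SimpleGraph.cycleGraph k) (⊤ : SimpleGraph (Fin 1))

/-- The double fan `DF_k`: a path on `k` vertices joined to two mutually adjacent new vertices. -/
def doubleFanGraph (k : ℕ) : SimpleGraph (Fin k ⊕ Fin 2) :=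
  graphJoin (SimpleGraph.pathGraph k) (⊤ : SimpleGraph (Fin 2))

/-- The triple fan `TF_k`: a path on `k` vertices joined to three mutually adjacent new
vertices. -/
def tripleFanGraph (k : ℕ) : SimpleGraph (Fin k ⊕ Fin 3) :=
  graphJoin (SimpleGraph.pathGraph k) (⊤ : SimpleGraph (Fin 3))

/-- The double wheel `D_k`: a cycle on `k` vertices joined to two nonadjacent hubs. -/
def doubleWheelGraph (k : ℕ) : SimpleGraph (Fin k ⊕ Fin 2) :=
  graphJoin (SimpleGraph.cycleGraph k) (⊥ : SimpleGraph (Fin 2))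

/-- The double wheel with axle `D'_k`: a cycle on `k` vertices joined to two adjacent hubs. -/
def doubleWheelAxleGraph (k : ℕ) : SimpleGraph (Fin k ⊕ Fin 2) :=
  graphJoin (SimpleGraph.cycleGraph k) (⊤ : SimpleGraph (Fin 2))

/-- The zigzag ladder `Z_k` with `2k` rungs: the square of the cycle `C_{2k}`. -/
def zigzagLadder (k : ℕ) : SimpleGraph (ZMod (2 * k)) :=
  SimpleGraph.circulantGraph ({1, 2} : Set (ZMod (2 * k)))

/-- The Möbius zigzag ladder `M_k` with `2k+1` rungs: the square of the cycle `C_{2k+1}`. -/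
def mobiusZigzagLadder (k : ℕ) : SimpleGraph (ZMod (2 * k + 1)) :=
  SimpleGraph.circulantGraph ({1, 2} : Set (ZMod (2 * k + 1)))

/-- `RamseyProp r k` : every simple graph on `r` vertices contains a clique of size `k`
or an independent set of size `k`. -/
def RamseyProp (r k : ℕ) : Prop :=
  ∀ G : SimpleGraph (Fin r),
    (∃ s : Finset (Fin r), G.IsNClique k s) ∨ (∃ s : Finset (Fin r), Gᶜ.IsNClique k s)

/-- The (diagonal) Ramsey number `R(k,k)`. -/
noncomputable def ramseyNumber (k : ℕ) : ℕ := sInf {r | RamseyProp r k}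

/-!
A minor `K_{1,r}` of `G` is a subgraph of a parallel minor `M`, which is connected because `G` is.
Growing connected branch sets around the `r + 1` vertices of the star until they cover `M` gives
a parallel minor `H` of `G` on the vertex set of the star that contains all its edges. By Ramsey's
theorem `k` of the leaves of `H` either form a clique, and contracting `H` onto them gives `K_k`,
or are pairwise non-adjacent, and contracting the hub together with all the other leaves gives
`K_{1,k}`. Parallel minors compose, so both are parallel minors of `G`.
-/

namespace SimpleGraph

variable {V W X : Type} {G : SimpleGraph V}

theorem exists_isNClique_succ_or_compl_of_forall_adj {a b : ℕ} {v : V} {N t : Finset V}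
    (hv : v ∈ t) (hNt : N ⊆ t) (hN : ∀ u ∈ N, G.Adj v u)
    (h : (∃ s ⊆ N, G.IsNClique a s) ∨ ∃ s ⊆ N, Gᶜ.IsNClique b s) :
    (∃ s ⊆ t, G.IsNClique (a + 1) s) ∨ ∃ s ⊆ t, Gᶜ.IsNClique b s := by
  classical
  rcases h with ⟨s, hsN, hs⟩ | ⟨s, hsN, hs⟩
  · exact .inl ⟨insert v s, Finset.insert_subset hv (hsN.trans hNt),
      hs.insert fun u hu => hN u (hsN hu)⟩
  · exact .inr ⟨s, hsN.trans hNt, hs⟩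

theorem exists_isNClique_or_compl_isNClique (G : SimpleGraph V) (a b : ℕ) (t : Finset V)
    (ht : 2 ^ (a + b) ≤ t.card) :
    (∃ s ⊆ t, G.IsNClique a s) ∨ ∃ s ⊆ t, Gᶜ.IsNClique b s := by
  classical
  match a, b with
  | 0, _ => exact .inl ⟨∅, t.empty_subset, by simp⟩
  | _ + 1, 0 => exact .inr ⟨∅, t.empty_subset, by simp⟩
  | a + 1, b + 1 =>
    obtain ⟨v, hv⟩ : t.Nonempty := Finset.card_pos.1 (lt_of_lt_of_le (by positivity) ht)
    set N := (t.erase v).filter (G.Adj v)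
    set N' := (t.erase v).filter fun u => ¬G.Adj v u
    have hNt : N ⊆ t := (Finset.filter_subset _ _).trans (Finset.erase_subset _ _)
    have hN't : N' ⊆ t := (Finset.filter_subset _ _).trans (Finset.erase_subset _ _)
    have hN' : ∀ u ∈ N', Gᶜ.Adj v u := fun u hu => by
      obtain ⟨hut, hvu⟩ := Finset.mem_filter.1 hu
      exact ⟨(Finset.ne_of_mem_erase hut).symm, hvu⟩
    have hcard : N.card + N'.card + 1 = t.card := by
      rw [Finset.card_filter_add_card_filter_not, Finset.card_erase_add_one hv]
    have hpow : 2 ^ (a + 1 + (b + 1)) = 2 ^ (a + (b + 1)) + 2 ^ (b + (a + 1)) := by ring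
    rcases (by omega : 2 ^ (a + (b + 1)) ≤ N.card ∨ 2 ^ (b + (a + 1)) ≤ N'.card) with h | h
    · exact exists_isNClique_succ_or_compl_of_forall_adj hv hNt
        (fun u hu => (Finset.mem_filter.1 hu).2) (G.exists_isNClique_or_compl_isNClique a _ N h)
    · have := exists_isNClique_succ_or_compl_of_forall_adj hv hN't hN'
        (Gᶜ.exists_isNClique_or_compl_isNClique b _ N' h)
      rwa [compl_compl, or_comm] at this
termination_by a + b

def contract (G : SimpleGraph V) (f : V → W) : SimpleGraph W where
  Adj a b := a ≠ b ∧ ∃ u v, f u = a ∧ f v = b ∧ G.Adj u v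
  symm := ⟨fun _ _ ⟨hne, u, v, hu, hv, huv⟩ => ⟨hne.symm, v, u, hv, hu, huv.symm⟩⟩
  loopless := ⟨fun _ h => h.1 rfl⟩

@[simp]
theorem contract_adj {f : V → W} {a b : W} :
    (G.contract f).Adj a b ↔ a ≠ b ∧ ∃ u v, f u = a ∧ f v = b ∧ G.Adj u v :=
  Iff.rfl

theorem contract_contract (f : V → W) (g : W → X) :
    (G.contract f).contract g = G.contract (g ∘ f) := by
  ext a b
  simp only [contract_adj, Function.comp_apply]
  constructor
  · rintro ⟨hab, _, _, rfl, rfl, -, u, v, rfl, rfl, huv⟩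
    exact ⟨hab, u, v, rfl, rfl, huv⟩
  · rintro ⟨hab, u, v, rfl, rfl, huv⟩
    exact ⟨hab, f u, f v, rfl, rfl, fun h => hab (congrArg g h), u, v, rfl, rfl, huv⟩

theorem Connected.contract (hG : G.Connected) {f : V → W} (hf : f.Surjective) :
    (G.contract f).Connected := by
  have : Nonempty W := hG.nonempty.map f
  refine ⟨fun a b => ?_⟩
  obtain ⟨u, rfl⟩ := hf a
  obtain ⟨v, rfl⟩ := hf b
  rw [reachable_iff_reflTransGen]
  refine Relation.ReflTransGen.lift' f (fun x y hxy => ?_) _ _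
    ((reachable_iff_reflTransGen u v).1 (hG.preconnected u v))
  show Relation.ReflTransGen _ (f x) (f y)
  by_cases h : f x = f y
  · exact h ▸ .refl
  · exact .single (r := (G.contract f).Adj) ⟨h, x, y, rfl, rfl, hxy⟩

theorem induce_preimage_connected {f : V → W}
    (hfib : ∀ w, (G.induce (f ⁻¹' {w})).Connected) {s : Set W}
    (hs : ((G.contract f).induce s).Connected) : (G.induce (f ⁻¹' s)).Connected := by
  have hfibre : ∀ x y : f ⁻¹' s, f x = f y → (G.induce (f ⁻¹' s)).Reachable x y := by
    intro x y hxy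
    have hsub : f ⁻¹' {f x} ⊆ f ⁻¹' s := fun z hz => by
      rw [Set.mem_preimage, Set.mem_singleton_iff.1 hz]; exact x.2
    exact ((hfib (f x)).preconnected ⟨x, rfl⟩ ⟨y, hxy.symm⟩).map
      (induceHomOfLE _ hsub).toHom
  have hwalk : ∀ {a b : s} (p : ((G.contract f).induce s).Walk a b) (x y : f ⁻¹' s),
      f x = a → f y = b → (G.induce (f ⁻¹' s)).Reachable x y := by
    intro a b p
    induction p with
    | nil => exact fun x y hx hy => hfibre x y (hx.trans hy.symm)
    | cons hab _ ih =>
      intro x y hx hy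
      obtain ⟨-, u, v, hu, hv, huv⟩ := (comap_adj.1 hab :)
      have hus : u ∈ f ⁻¹' s := by simp [Set.mem_preimage, hu]
      have hvs : v ∈ f ⁻¹' s := by simp [Set.mem_preimage, hv]
      exact (hfibre x ⟨u, hus⟩ (hx.trans hu.symm)).trans
        ((show (G.induce (f ⁻¹' s)).Adj ⟨u, hus⟩ ⟨v, hvs⟩ from huv).reachable.trans
          (ih ⟨v, hvs⟩ y hv hy))
  obtain ⟨⟨a, ha⟩⟩ := hs.nonempty
  obtain ⟨⟨x, hx⟩⟩ := (hfib a).nonempty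
  have : Nonempty (f ⁻¹' s) :=
    ⟨⟨x, by rwa [Set.mem_preimage, Set.mem_singleton_iff.1 hx]⟩⟩
  exact ⟨fun x y =>
    (hs.preconnected ⟨f x, x.2⟩ ⟨f y, y.2⟩).elim fun p => hwalk p x y rfl rfl⟩

end SimpleGraph

open SimpleGraph

theorem ramseyProp_two_pow (k : ℕ) : RamseyProp (2 ^ (k + k)) k := fun G => by
  simpa using G.exists_isNClique_or_compl_isNClique k k Finset.univ (by simp)

theorem ramseyProp_ramseyNumber (k : ℕ) : RamseyProp (ramseyNumber k) k :=
  Nat.sInf_mem (s := {r | RamseyProp r k}) ⟨_, ramseyProp_two_pow k⟩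

theorem hasParallelMinor_iff {V W : Type} {G : SimpleGraph V} {H : SimpleGraph W} :
    HasParallelMinor G H ↔ ∃ f : V → W, f.Surjective ∧
      (∀ w, (G.induce (f ⁻¹' {w})).Connected) ∧ H = G.contract f := by
  simp only [HasParallelMinor, SimpleGraph.ext_iff, funext_iff, eq_iff_iff, contract_adj]

theorem HasParallelMinor.trans {V W X : Type} {G : SimpleGraph V} {H : SimpleGraph W}
    {K : SimpleGraph X} (hGH : HasParallelMinor G H) (hHK : HasParallelMinor H K) :
    HasParallelMinor G K := by
  obtain ⟨f, hf, hfib, rfl⟩ := hasParallelMinor_iff.1 hGH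
  obtain ⟨g, hg, hgib, rfl⟩ := hasParallelMinor_iff.1 hHK
  exact hasParallelMinor_iff.2 ⟨g ∘ f, hg.comp hf,
    fun x => induce_preimage_connected hfib (hgib x), contract_contract f g⟩

theorem HasParallelMinor.connected {V W : Type} {G : SimpleGraph V} {H : SimpleGraph W}
    (h : HasParallelMinor G H) (hG : G.Connected) : H.Connected := by
  obtain ⟨f, hf, -, rfl⟩ := hasParallelMinor_iff.1 h
  exact hG.contract hf

namespace SimpleGraph

variable {V W : Type} {G : SimpleGraph V}

theorem Preconnected.exists_adj_of_mem_of_notMem (hG : G.Preconnected) {D : Set V} {x y : V}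
    (hx : x ∈ D) (hy : y ∉ D) : ∃ u ∈ D, ∃ v ∉ D, G.Adj u v := by
  obtain ⟨p⟩ := hG x y
  obtain ⟨d, -, hd₁, hd₂⟩ := p.exists_boundary_dart D hx hy
  exact ⟨_, hd₁, _, hd₂, d.adj⟩

theorem preconnected_induce_insert_inter_update_preimage [DecidableEq V] {D : Set V}
    {g : V → W} {u v : V} (hu : u ∈ D) (hv : v ∉ D) (huv : G.Adj u v)
    (hg : ∀ w, (G.induce (D ∩ g ⁻¹' {w})).Preconnected) (w : W) :
    (G.induce (insert v D ∩ Function.update g v (g u) ⁻¹' {w})).Preconnected := by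
  by_cases hw : g u = w
  · have : insert v D ∩ Function.update g v (g u) ⁻¹' {w} = (D ∩ g ⁻¹' {w}) ∪ {v} := by
      ext x
      by_cases hx : x = v
      · subst hx; simp [hw]
      · simp [hx]
    rw [this]
    exact (connected_induce_union (t := {v}) (hg w) .of_subsingleton ⟨hu, hw⟩ rfl
      huv).preconnected
  · have : insert v D ∩ Function.update g v (g u) ⁻¹' {w} = D ∩ g ⁻¹' {w} := by
      ext x
      by_cases hx : x = v
      · subst hx; simp [hw, hv]
      · simp [hx]
    rw [this]
    exact hg w

/-- Grow the fibres from the seeds `e w` one adjacent vertex at a time, keeping each connected. -/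
theorem Connected.exists_connected_fibres_of_embedding [Finite V] [Nonempty W]
    (hG : G.Connected) (e : W ↪ V) :
    ∃ g : V → W, (∀ w, g (e w) = w) ∧ ∀ w, (G.induce (g ⁻¹' {w})).Connected := by
  classical
  suffices h : ∀ n (D : Set V) (g : V → W), Dᶜ.ncard = n →
      (∀ w, e w ∈ D ∧ g (e w) = w) →
      (∀ w, (G.induce (D ∩ g ⁻¹' {w})).Preconnected) →
      ∃ g : V → W, (∀ w, g (e w) = w) ∧ ∀ w, (G.induce (g ⁻¹' {w})).Connected by
    refine h _ (Set.range e) (Function.invFun e) rfl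
      (fun w => ⟨Set.mem_range_self w, Function.leftInverse_invFun e.injective w⟩) fun w => ?_
    have : (Set.range e ∩ Function.invFun e ⁻¹' {w}).Subsingleton := by
      rintro _ ⟨⟨a, rfl⟩, ha⟩ _ ⟨⟨b, rfl⟩, hb⟩
      simp only [Set.mem_preimage, Set.mem_singleton_iff,
        Function.leftInverse_invFun e.injective _] at ha hb
      rw [ha, hb]
    have := this.coe_sort
    exact .of_subsingleton
  intro n
  induction n using Nat.strong_induction_on with
  | _ n ih =>
    intro D g hD hge hg
    by_cases hDc : Dᶜ.Nonempty
    · obtain ⟨y, hy⟩ := hDc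
      obtain ⟨w₀⟩ := ‹Nonempty W›
      obtain ⟨u, hu, v, hv, huv⟩ := hG.preconnected.exists_adj_of_mem_of_notMem (hge w₀).1 hy
      refine ih _ ?_ (insert v D) (Function.update g v (g u)) rfl (fun w => ?_)
        (preconnected_induce_insert_inter_update_preimage hu hv huv hg)
      · exact hD ▸ Set.ncard_lt_ncard (compl_lt_compl_iff_lt.2 (Set.ssubset_insert hv))
      · have hev : e w ≠ v := fun h => hv (h ▸ (hge w).1)
        exact ⟨Set.mem_insert_of_mem _ (hge w).1, by rw [Function.update_of_ne hev, (hge w).2]⟩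
    · rw [Set.not_nonempty_iff_eq_empty, Set.compl_empty_iff] at hDc
      subst hDc
      refine ⟨g, fun w => (hge w).2, fun w => ?_⟩
      have : Nonempty (g ⁻¹' {w}) := ⟨⟨e w, (hge w).2⟩⟩
      have hw := hg w
      rw [Set.univ_inter] at hw
      exact ⟨hw⟩

theorem induce_connected_of_forall_adj {s : Set V} {c : V} (hc : c ∈ s)
    (h : ∀ v ∈ s, v ≠ c → G.Adj c v) : (G.induce s).Connected := by
  refine G.induce_connected_of_patches c hc fun {v} hv => ?_
  by_cases hvc : v = c
  · subst hvc
    exact ⟨s, subset_rfl, hc, hv, .rfl⟩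
  · exact ⟨{c, v}, Set.insert_subset hc (Set.singleton_subset_iff.2 hv), by simp, by simp,
      (induce_pair_connected_of_adj (h v hv hvc)).preconnected _ _⟩

theorem Connected.exists_hasParallelMinor_le [Finite V] [Nonempty W] {H : SimpleGraph W}
    (hG : G.Connected) (h : ContainsSubgraph G H) :
    ∃ H' : SimpleGraph W, H ≤ H' ∧ HasParallelMinor G H' := by
  obtain ⟨e, he⟩ := h
  obtain ⟨g, hge, hg⟩ := hG.exists_connected_fibres_of_embedding e
  exact ⟨G.contract g, fun a b hab => ⟨hab.ne, e a, e b, hge a, hge b, he a b hab⟩,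
    hasParallelMinor_iff.2 ⟨g, fun w => ⟨e w, hge w⟩, hg, rfl⟩⟩

theorem Connected.hasParallelMinor_top [Finite V] [Nonempty W] (hG : G.Connected)
    (φ : (⊤ : SimpleGraph W) ↪g G) : HasParallelMinor G (⊤ : SimpleGraph W) := by
  obtain ⟨H, hH, hGH⟩ :=
    hG.exists_hasParallelMinor_le ⟨φ.toEmbedding, fun _ _ => φ.map_adj_iff.2⟩
  rwa [top_le_iff.1 hH] at hGH

/-- Contract everything outside an independent set `range e` onto a common neighbour `c`. -/
theorem hasParallelMinor_completeBipartiteGraph (e : W ↪ V) {c : V} (hc : c ∉ Set.range e)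
    (hce : ∀ w, G.Adj c (e w)) (hind : ∀ a b, ¬G.Adj (e a) (e b))
    (hconn : (G.induce (Set.range e)ᶜ).Connected) :
    HasParallelMinor G (completeBipartiteGraph (Fin 1) W) := by
  classical
  set f : V → Fin 1 ⊕ W := Function.extend e Sum.inr fun _ => .inl 0
  have hfe : ∀ w, f (e w) = .inr w := e.injective.extend_apply _ _
  have hf_inr : ∀ v w, f v = .inr w ↔ v = e w := by
    intro v w
    by_cases hv : v ∈ Set.range e
    · obtain ⟨a, rfl⟩ := hv
      simp [hfe]
    · simp only [f, Function.extend_apply' _ _ _ hv]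
      exact ⟨Sum.inl_ne_inr.elim, fun h => (hv ⟨w, h.symm⟩).elim⟩
  have hf_inl : ∀ v a, f v = .inl a ↔ v ∉ Set.range e := by
    intro v a
    by_cases hv : v ∈ Set.range e
    · obtain ⟨b, rfl⟩ := hv
      simp [hfe]
    · simp only [f, Function.extend_apply' _ _ _ hv, Subsingleton.elim a 0, hv]
      simp
  refine ⟨f, ?_, ?_, ?_⟩
  · rintro (a | w)
    · exact ⟨c, (hf_inl c a).2 hc⟩
    · exact ⟨e w, hfe w⟩
  · rintro (a | w)
    · rwa [show f ⁻¹' {.inl a} = (Set.range e)ᶜ from Set.ext fun v => hf_inl v a]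
    · rw [show f ⁻¹' {.inr w} = {e w} from Set.ext fun v => hf_inr v w]
      exact ⟨.of_subsingleton⟩
  · rintro (a | a) (b | b) <;> simp only [completeBipartiteGraph_adj, hf_inl, hf_inr] <;> simp
    · exact fun hab => (hab (Subsingleton.elim a b)).elim
    · exact ⟨c, by simpa using hc, hce b⟩
    · exact ⟨c, by simpa using hc, (hce a).symm⟩
    · exact fun _ => hind a b

theorem hasParallelMinor_completeBipartiteGraph_of_compl_comap_inr {α : Type}
    {H : SimpleGraph (Fin 1 ⊕ α)} (hhub : ∀ i, H.Adj (.inl 0) (.inr i))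
    (φ : (⊤ : SimpleGraph W) ↪g (H.comap Sum.inr)ᶜ) :
    HasParallelMinor H (completeBipartiteGraph (Fin 1) W) := by
  refine hasParallelMinor_completeBipartiteGraph (φ.toEmbedding.trans .inr) (c := .inl 0)
    (by simp) (fun w => hhub _) (fun a b hab => ?_)
    (induce_connected_of_forall_adj (c := .inl 0) (by simp) ?_)
  · by_cases hne : a = b
    · exact H.loopless.irrefl _ (hne ▸ hab)
    · exact (φ.map_adj_iff.2 hne).2 hab
  · rintro (a | i) - hv
    · exact (hv (congrArg _ (Subsingleton.elim a 0))).elim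
    · exact hhub i

end SimpleGraph

/-- If `r = R(k,k)` is the Ramsey number, then every connected graph with a minor isomorphic
to the star `K_{1,r}` contains a parallel minor isomorphic to `K_{1,k}` or to `K_k`. -/
theorem star_minor_gives_parallel_minor (k : ℕ) (hk : 0 < k)
    (V : Type) [Fintype V] (G : SimpleGraph V) (hG : G.Connected)
    (hminor : HasMinor G (completeBipartiteGraph (Fin 1) (Fin (ramseyNumber k)))) :
    HasParallelMinor G (completeBipartiteGraph (Fin 1) (Fin k)) ∨
    HasParallelMinor G (⊤ : SimpleGraph (Fin k)) := by
  obtain ⟨n, M, hGM, hMstar⟩ := hminor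
  obtain ⟨H, hstar, hMH⟩ := (hGM.connected hG).exists_hasParallelMinor_le hMstar
  have hGH := hGM.trans hMH
  rcases ramseyProp_ramseyNumber k (H.comap Sum.inr) with ⟨s, hs⟩ | ⟨s, hs⟩
  · have : NeZero k := ⟨hk.ne'⟩
    exact .inr <| hGH.trans <| (hGH.connected hG).hasParallelMinor_top <|
      (topEmbeddingOfNotCliqueFree hs.not_cliqueFree).trans (Embedding.comap .inr H)
  · exact .inl <| hGH.trans <| hasParallelMinor_completeBipartiteGraph_of_compl_comap_inr
      (fun i => hstar (by simp)) (topEmbeddingOfNotCliqueFree hs.not_cliqueFree)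
end

section
/- For every integer r > 2 there exists an integer N such that every 2-connected finite simple graph with at least N vertices contains a minor isomorphic to the cycle C_r or to the complete bipartite graph K_{2,r}. -/
open SimpleGraph

/-!
Take a breadth-first search tree of `G`. A tree of depth at most `ℓ` in which every vertex has
at most `b` children whose subtrees meet a target set `A` reaches at most `∑_{i ≤ ℓ} b ^ i`
vertices of `A`. Hence, if `G` is large, either some vertex `x` is at distance at least `r - 1`
from the root `a`, or some vertex `u` has huge degree. In the first case, Whitney's two
internally disjoint `a`–`x` paths form a cycle of length at least `r`, which contracts onto
`C_r`. In the second case, run the same search in `G - u` (connected, by 2-connectivity) with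
the neighbors of `u` as targets: either two neighbors of `u` are at distance at least `r - 1`
in `G - u`, and a shortest path between them closes through `u` into a long cycle, or some
vertex `v` has `r` children whose subtrees contain neighbors of `u`; these subtrees, together
with the hubs `u` and `v`, are the branch sets of a `K_{2,r}` minor.
-/

open Function

variable {V W : Type} {G : SimpleGraph V}

namespace SimpleGraph

lemma connected_induce_insert {s : Set V} {a b : V} (hs : (G.induce s).Connected) (hb : b ∈ s)
    (hab : G.Adj a b) : (G.induce (insert a s)).Connected := by
  have := induce_union_connected (G.induce_pair_connected_of_adj hab).preconnected hs.preconnected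
    ⟨b, by simp, hb⟩
  rwa [Set.insert_union, Set.singleton_union, Set.insert_eq_of_mem hb] at this

lemma connected_induce_image_val {s : Set V} {D : Set s} (h : ((G.induce s).induce D).Connected) :
    (G.induce (Subtype.val '' D)).Connected :=
  h.map ⟨fun x => ⟨x.1.1, x.1, x.2, rfl⟩, fun hxy => hxy⟩
    (by rintro ⟨_, x, hx, rfl⟩; exact ⟨⟨x, hx⟩, rfl⟩)

lemma Connected.exists_adj_dist_eq_add_one (hG : G.Connected) {a x : V} (hx : x ≠ a) :
    ∃ y, G.Adj x y ∧ G.dist a y + 1 = G.dist a x := by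
  obtain ⟨p, hp⟩ := hG.exists_walk_length_eq_dist x a
  cases p with
  | nil => exact absurd rfl hx
  | @cons _ y _ h q =>
    refine ⟨y, h, ?_⟩
    have h₁ := dist_le q.reverse
    have h₂ : G.dist a x ≤ G.dist a y + G.dist y x := hG.dist_triangle
    rw [dist_eq_one_iff_adj.mpr h.symm] at h₂
    rw [Walk.length_cons, dist_comm] at hp
    rw [Walk.length_reverse] at h₁
    omega

lemma Reachable.exists_isPath_of_induce {s : Set V} {a b : s} (h : (G.induce s).Reachable a b) :
    ∃ P : G.Walk a b, P.IsPath ∧ (G.induce s).dist a b ≤ P.length ∧ ∀ x ∈ P.support, x ∈ s := by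
  obtain ⟨q, hq, hlen⟩ := h.exists_path_of_dist
  have hsupp : ∀ x ∈ (q.map (Embedding.induce s).toHom).support, x ∈ s := by
    intro x hx
    rw [Walk.support_map, List.mem_map] at hx
    obtain ⟨y, -, rfl⟩ := hx
    exact y.2
  exact ⟨_, hq.map Subtype.val_injective, (Walk.length_map _ q).symm ▸ hlen.ge, hsupp⟩

namespace Walk

variable {u v w : V}

lemma IsPath.append {p : G.Walk u v} {q : G.Walk v w} (hp : p.IsPath) (hq : q.IsPath)
    (h : ∀ x ∈ p.support, x ∈ q.support → x = v) : (p.append q).IsPath := by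
  rw [isPath_def, support_append]
  refine hp.support_nodup.append (hq.support_nodup.sublist q.support.tail_sublist) ?_
  intro x hxp hxq
  obtain rfl := h x hxp (List.mem_of_mem_tail hxq)
  have hnd := hq.support_nodup
  rw [← q.cons_tail_support] at hnd
  exact (List.nodup_cons.mp hnd).1 hxq

lemma IsPath.start_notMem_support_tail {p : G.Walk u v} (hp : p.IsPath) : u ∉ p.support.tail := by
  have hnd := hp.support_nodup
  rw [← p.cons_tail_support] at hnd
  exact (List.nodup_cons.mp hnd).1

lemma exists_isPath_to_first_mem (S : Set V) {a b : V} (R : G.Walk a b) (hR : R.IsPath)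
    (hb : b ∈ S) : ∃ x ∈ S, ∃ R' : G.Walk a x, R'.IsPath ∧ (∀ y ∈ R'.support, y ∈ R.support) ∧
      ∀ y ∈ R'.support, y ∈ S → y = x := by
  induction R with
  | nil => exact ⟨_, hb, nil, .nil, fun y hy => hy, fun y hy _ => by simpa using hy⟩
  | @cons a _ _ h p ih =>
    by_cases ha : a ∈ S
    · exact ⟨a, ha, nil, .nil, by simp, fun y hy _ => by simpa using hy⟩
    obtain ⟨x, hx, R', hR', hsub, hfirst⟩ := ih hR.of_cons hb
    refine ⟨x, hx, cons h R', (cons_isPath_iff _ _).mpr ⟨hR', fun haR => ?_⟩, ?_, ?_⟩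
    · exact ((cons_isPath_iff _ _).mp hR).2 (hsub a haR)
    · simp only [support_cons, List.mem_cons, forall_eq_or_imp, true_or, true_and]
      exact fun y hy => Or.inr (hsub y hy)
    · simp only [support_cons, List.mem_cons, forall_eq_or_imp]
      exact ⟨fun h => absurd h ha, hfirst⟩

def InternallyDisjoint (P Q : G.Walk u w) : Prop :=
  ∀ x ∈ P.support, x ∈ Q.support → x = u ∨ x = w

lemma InternallyDisjoint.symm {P Q : G.Walk u w} (h : P.InternallyDisjoint Q) :
    Q.InternallyDisjoint P :=
  fun x hQ hP => h x hP hQ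

lemma IsPath.isCycle_append_reverse {P Q : G.Walk u w} (hP : P.IsPath) (hQ : Q.IsPath)
    (hPQ : P.InternallyDisjoint Q) (hlen : 1 < P.length ∨ 1 < Q.length) :
    (P.append Q.reverse).IsCycle := by
  refine hP.isCycle_append hQ.reverse (fun x hxP hxQ => ?_) (by simpa using hlen)
  have hxQ' : x ∈ Q.support := by simpa using List.mem_of_mem_tail hxQ
  rcases hPQ x (List.mem_of_mem_tail hxP) hxQ' with rfl | rfl
  · exact hP.start_notMem_support_tail hxP
  · exact hQ.reverse.start_notMem_support_tail hxQ

/-- The inductive step of Whitney's argument: reroute `P` from `x` back along `R` to `w`, and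
extend `Q` by the edge `w'w`. -/
lemma InternallyDisjoint.exists_extend {w' x : V} {P Q : G.Walk u w'} (hP : P.IsPath)
    (hQ : Q.IsPath) (hPQ : P.InternallyDisjoint Q) (huw' : u ≠ w') (hwu : w ≠ u)
    (hw : G.Adj w' w) {R : G.Walk w x} (hR : R.IsPath) (hx : x ∈ P.support)
    (hw'R : w' ∉ R.support) (hRfirst : ∀ y ∈ R.support, y ∈ P.support ∨ y ∈ Q.support → y = x) :
    ∃ P' Q' : G.Walk u w, P'.IsPath ∧ Q'.IsPath ∧ P'.InternallyDisjoint Q' ∧ 1 < Q'.length := by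
  classical
  have hxw' : x ≠ w' := fun h => hw'R (h ▸ R.end_mem_support)
  have hwQ : w ∉ Q.support := fun hwQ => by
    obtain rfl := hRfirst w R.start_mem_support (Or.inr hwQ)
    exact (hPQ w hx hwQ).elim hwu hw.ne.symm
  refine ⟨(P.takeUntil x hx).append R.reverse, Q.concat hw,
    (hP.takeUntil hx).append hR.reverse fun y hyP hyR => hRfirst y (by simpa using hyR)
      (Or.inl (P.support_takeUntil_subset_support hx hyP)),
    hQ.concat hwQ hw, fun y hy₁ hy₂ => ?_, ?_⟩
  · rw [support_concat, List.mem_append, List.mem_singleton] at hy₂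
    rcases hy₂ with hyQ | rfl
    · rcases List.mem_append.mp (support_append _ _ ▸ hy₁) with hyT | hyR
      · rcases hPQ y (P.support_takeUntil_subset_support hx hyT) hyQ with h | rfl
        · exact Or.inl h
        · exact absurd hyT (endpoint_notMem_support_takeUntil hP hx hxw'.symm)
      · obtain rfl := hRfirst y (by simpa using List.mem_of_mem_tail hyR) (Or.inr hyQ)
        exact Or.inl ((hPQ y hx hyQ).resolve_right hxw')
    · exact Or.inr rfl
  · have : Q.length ≠ 0 := fun h => huw' (eq_of_length_eq_zero h)
    simp only [length_concat]
    omega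

lemma connected_induce_getVert_image_Icc (p : G.Walk u v) {m n : ℕ} (hmn : m ≤ n) :
    (G.induce (p.getVert '' Set.Icc m n)).Connected := by
  induction n, hmn using Nat.le_induction with
  | base => rw [Set.Icc_self, Set.image_singleton, induce_singleton_eq_top]; exact connected_top
  | succ n hmn ih =>
    have hIcc : Set.Icc m (n + 1) = insert (n + 1) (Set.Icc m n) := by
      ext; simp; omega
    have hn : p.getVert n ∈ p.getVert '' Set.Icc m n := ⟨n, ⟨hmn, le_rfl⟩, rfl⟩
    rw [hIcc, Set.image_insert_eq]
    by_cases hlen : n < p.length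
    · exact connected_induce_insert ih hn (p.adj_getVert_succ hlen).symm
    · have : p.getVert (n + 1) = p.getVert n := by
        rw [p.getVert_of_length_le (by omega), p.getVert_of_length_le (by omega)]
      rwa [this, Set.insert_eq_of_mem hn]

lemma IsPath.isCycle_cons_concat {u a x : V} {P : G.Walk a x} (hP : P.IsPath)
    (hu : u ∉ P.support) (hax : a ≠ x) (ha : G.Adj u a) (hx : G.Adj x u) :
    (Walk.cons ha (P.concat hx)).IsCycle := by
  refine (Walk.cons_isCycle_iff _ _).mpr ⟨hP.concat hu hx, fun he => ?_⟩
  rw [Walk.edges_concat, List.concat_eq_append, List.mem_append, List.mem_singleton] at he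
  rcases he with he | he
  · exact hu (P.fst_mem_support_of_mem_edges he)
  · rcases Sym2.eq_iff.mp he with ⟨rfl, -⟩ | ⟨-, rfl⟩
    · exact hu P.end_mem_support
    · exact hax rfl

end Walk

end SimpleGraph

/-! ### Minor models -/

theorem exists_extension_of_connected_fibres [Finite V] [Nonempty W] (hG : G.Connected)
    (f : V → Option W) (hf : ∀ w, (G.induce (f ⁻¹' {some w})).Connected) :
    ∃ g : V → W, (∀ v w, f v = some w → g v = w) ∧ ∀ w, (G.induce (g ⁻¹' {w})).Connected := by
  classical
  have := Fintype.ofFinite V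
  obtain ⟨n, hn⟩ : ∃ n, (Finset.univ.filter (f · = none)).card = n := ⟨_, rfl⟩
  induction n generalizing f with
  | zero =>
    rw [Finset.card_eq_zero, Finset.filter_eq_empty_iff] at hn
    have hsome : ∀ v, (f v).isSome := fun v => Option.isSome_iff_ne_none.mpr (hn (by simp))
    refine ⟨fun v => (f v).get (hsome v), fun v w h => by simp [h], fun w => ?_⟩
    have : (fun v => (f v).get (hsome v)) ⁻¹' {w} = f ⁻¹' {some w} := by
      ext v
      simp [Option.eq_some_iff_get_eq, hsome v]
    exact this ▸ hf w
  | succ n ih =>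
    obtain ⟨a, ha⟩ := Finset.card_pos.mp (by omega : 0 < (Finset.univ.filter (f · = none)).card)
    obtain ⟨c, hc⟩ := (hf (Classical.arbitrary W)).nonempty
    obtain ⟨d, -, hd₁, hd₂⟩ := (hG.preconnected c a).some.exists_boundary_dart
      {v | f v ≠ none} (by simp_all) (by simp_all)
    obtain ⟨w, hw⟩ := Option.ne_none_iff_exists'.mp hd₁
    simp only [Set.mem_ofPred_eq, not_not] at hd₂
    set f' := Function.update f d.snd (some w)
    have hfib (w') : (G.induce (f' ⁻¹' {some w'})).Connected := by
      by_cases h : w' = w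
      · subst h
        have : f' ⁻¹' {some w'} = insert d.snd (f ⁻¹' {some w'}) := by
          ext v
          by_cases hv : v = d.snd <;> simp_all [f']
        exact this ▸ connected_induce_insert (hf w') hw d.adj.symm
      · have : f' ⁻¹' {some w'} = f ⁻¹' {some w'} := by
          ext v
          by_cases hv : v = d.snd <;> simp_all [f', eq_comm]
        exact this ▸ hf w'
    have hcard : Finset.univ.filter (f' · = none) =
        (Finset.univ.filter (f · = none)).erase d.snd := by
      ext v
      by_cases hv : v = d.snd <;> simp_all [f']
    obtain ⟨g, hgf, hg⟩ := ih f' hfib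
      (by rw [hcard, Finset.card_erase_of_mem (by simpa using hd₂), hn]; rfl)
    refine ⟨g, fun v w' hv => hgf v w' ?_, hg⟩
    have : v ≠ d.snd := by rintro rfl; simp_all
    simp [f', this, hv]

theorem hasMinor_of_connected_fibres [Finite W] {T : SimpleGraph W} (g : V → W)
    (hg : ∀ w, (G.induce (g ⁻¹' {w})).Connected)
    (hT : ∀ a b, T.Adj a b → ∃ x y, g x = a ∧ g y = b ∧ G.Adj x y) : HasMinor G T := by
  have := Fintype.ofFinite W
  let e := Fintype.equivFin W
  refine ⟨Fintype.card W, fromRel fun i j => ∃ x y, e (g x) = i ∧ e (g y) = j ∧ G.Adj x y,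
    ⟨e ∘ g, fun i => ?_, fun i => ?_, fun i j => ?_⟩, e.toEmbedding, fun a b hab => ?_⟩
  · obtain ⟨⟨v, hv⟩⟩ := (hg (e.symm i)).nonempty
    exact ⟨v, by simpa [← Equiv.eq_symm_apply] using hv⟩
  · have : e ∘ g ⁻¹' {i} = g ⁻¹' {e.symm i} := by
      ext v
      simp [← Equiv.eq_symm_apply]
    exact this ▸ hg _
  · rw [fromRel_adj]
    exact and_congr_right fun _ =>
      or_iff_left_of_imp fun ⟨x, y, hx, hy, h⟩ => ⟨y, x, hy, hx, h.symm⟩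
  · obtain ⟨x, y, rfl, rfl, hxy⟩ := hT a b hab
    exact (fromRel_adj _ _ _).mpr ⟨e.injective.ne hab.ne, Or.inl ⟨x, y, rfl, rfl, hxy⟩⟩

theorem hasMinor_of_branchSets [Finite V] [Finite W] [Nonempty W] {T : SimpleGraph W}
    (hG : G.Connected) (B : W → Set V) (hB : Pairwise (Disjoint on B))
    (hconn : ∀ w, (G.induce (B w)).Connected)
    (hT : ∀ a b, T.Adj a b → ∃ x ∈ B a, ∃ y ∈ B b, G.Adj x y) : HasMinor G T := by
  classical
  let f : V → Option W := fun v => if h : ∃ w, v ∈ B w then some h.choose else none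
  have hf : ∀ v w, f v = some w ↔ v ∈ B w := by
    intro v w
    by_cases h : ∃ w, v ∈ B w
    · simp only [f, dif_pos h, Option.some.injEq]
      exact ⟨fun hw => hw ▸ h.choose_spec, fun hv => hB.eq
        (Set.not_disjoint_iff.mpr ⟨v, h.choose_spec, hv⟩)⟩
    · simp only [f, dif_neg h, reduceCtorEq, false_iff]
      exact fun hv => h ⟨w, hv⟩
  obtain ⟨g, hgf, hg⟩ := exists_extension_of_connected_fibres hG f fun w => by
    rw [show f ⁻¹' {some w} = B w from Set.ext fun v => hf v w]
    exact hconn w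
  refine hasMinor_of_connected_fibres g hg fun a b hab => ?_
  obtain ⟨x, hx, y, hy, hxy⟩ := hT a b hab
  exact ⟨x, y, hgf x a ((hf x a).mpr hx), hgf y b ((hf y b).mpr hy), hxy⟩

theorem hasMinor_completeBipartiteGraph {κ ι : Type} [Finite V] [Finite κ] [Finite ι]
    [Nonempty κ] (hG : G.Connected) (h : κ → V) (hh : Injective h) (L : ι → Set V)
    (hL : Pairwise (Disjoint on L)) (hconn : ∀ i, (G.induce (L i)).Connected)
    (hhL : ∀ k i, h k ∉ L i) (hadj : ∀ k i, ∃ x ∈ L i, G.Adj (h k) x) :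
    HasMinor G (completeBipartiteGraph κ ι) := by
  refine hasMinor_of_branchSets hG (Sum.elim (fun k => {h k}) L) ?_ ?_ ?_
  · rintro (k | i) (k' | i') hne
    · simpa [onFun] using hh.ne fun e => hne (congrArg _ e)
    · simpa [onFun] using hhL k i'
    · simpa [onFun] using hhL k' i
    · exact hL fun e => hne (congrArg _ e)
  · rintro (k | i)
    · simp only [Sum.elim_inl, induce_singleton_eq_top]
      exact connected_top
    · exact hconn i
  · rintro (k | i) (k' | i') hab
    · simp at hab
    · obtain ⟨x, hx, hkx⟩ := hadj k i'
      exact ⟨h k, rfl, x, hx, hkx⟩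
    · obtain ⟨x, hx, hkx⟩ := hadj k' i
      exact ⟨x, hx, h k', rfl, hkx.symm⟩
    · simp at hab

theorem hasMinor_cycleGraph_of_branchSets [Finite V] {n : ℕ} (hG : G.Connected)
    (B : Fin (n + 3) → Set V) (hB : Pairwise (Disjoint on B))
    (hconn : ∀ i, (G.induce (B i)).Connected)
    (hstep : ∀ i, ∃ x ∈ B i, ∃ y ∈ B (i + 1), G.Adj x y) : HasMinor G (cycleGraph (n + 3)) := by
  refine hasMinor_of_branchSets hG B hB hconn fun a b hab => ?_
  rcases cycleGraph_adj.mp hab with h | h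
  · obtain ⟨x, hx, y, hy, hxy⟩ := hstep b
    rw [← eq_add_of_sub_eq' h] at hy
    exact ⟨y, hy, x, hx, hxy.symm⟩
  · obtain ⟨x, hx, y, hy, hxy⟩ := hstep a
    rw [← eq_add_of_sub_eq' h] at hy
    exact ⟨x, hx, y, hy, hxy⟩

namespace SimpleGraph.Walk

theorem IsCycle.hasMinor_cycleGraph [Finite V] {v : V} {c : G.Walk v v} (hc : c.IsCycle)
    (hG : G.Connected) {r : ℕ} (hr : 3 ≤ r) (hlen : r ≤ c.length) :
    HasMinor G (cycleGraph r) := by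
  obtain ⟨n, rfl⟩ : ∃ n, r = n + 3 := ⟨r - 3, by omega⟩
  -- the last branch set absorbs the rest of the cycle
  let last (i : Fin (n + 3)) : ℕ := if i = Fin.last _ then c.length - 1 else i
  have hidx (i : Fin (n + 3)) (s : ℕ) (hs : s ∈ Set.Icc (i : ℕ) (last i)) :
      s ≤ c.length - 1 ∧ min s (n + 2) = i := by
    have := i.isLt
    simp only [last, Set.mem_Icc] at hs
    split_ifs at hs with h
    · subst h
      simp only [Fin.val_last, inf_eq_right] at hs ⊢
      omega
    · have : (i : ℕ) ≠ n + 2 := fun h' => h (Fin.ext h')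
      omega
  refine hasMinor_cycleGraph_of_branchSets hG (fun i => c.getVert '' Set.Icc i (last i))
    (fun i j hij => Set.disjoint_left.mpr ?_)
    (fun i => c.connected_induce_getVert_image_Icc (by simp only [last]; split_ifs <;> omega))
    fun i => ?_
  · rintro _ ⟨s, hs, rfl⟩ ⟨t, ht, hst⟩
    have hs' := hidx i s hs
    have ht' := hidx j t ht
    have := hc.getVert_injOn' ht'.1 hs'.1 hst
    exact hij (Fin.ext (by omega))
  by_cases h : i = Fin.last _
  · subst h
    refine ⟨c.getVert (c.length - 1),
      ⟨_, ⟨by simp only [Fin.val_last]; omega, by simp [last]⟩, rfl⟩,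
      c.getVert 0, ⟨0, by simp [last], rfl⟩, ?_⟩
    simpa [Nat.sub_add_cancel (by omega : 1 ≤ c.length)] using
      c.adj_getVert_succ (by omega : c.length - 1 < c.length)
  · have hi : ((i + 1 : Fin (n + 3)) : ℕ) = i + 1 :=
      Fin.val_add_one_of_lt (Fin.lt_last_iff_ne_last.mpr h)
    refine ⟨c.getVert i, ⟨i, by simp [last, h], rfl⟩, c.getVert (i + 1),
      ⟨i + 1, ?_, rfl⟩, c.adj_getVert_succ (by omega)⟩
    simp only [last, Set.mem_Icc, hi]
    split_ifs <;> omega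

end SimpleGraph.Walk

/-! ### Whitney's two paths -/

theorem KConnected.connected [Fintype V] {k : ℕ} (hG : KConnected k G) (hk : 0 < k) :
    G.Connected :=
  (induceUnivIso G).connected_iff.mp (Set.compl_empty (α := V) ▸ hG.2 ∅ (by simpa using hk))

theorem KConnected.exists_internallyDisjoint_paths_of_adj [Fintype V] (hG : KConnected 2 G)
    {u w : V} (huw : G.Adj u w) : ∃ P Q : G.Walk u w, P.IsPath ∧ Q.IsPath ∧
      P.InternallyDisjoint Q ∧ 1 < P.length := by
  classical
  obtain ⟨t, ht⟩ : ({u, w}ᶜ : Finset V).Nonempty := by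
    rw [← Finset.card_pos, Finset.card_compl, Finset.card_pair huw.ne]
    have := hG.1
    omega
  simp only [Finset.mem_compl, Finset.mem_insert, Finset.mem_singleton, not_or] at ht
  obtain ⟨⟨z, hzw⟩, huz⟩ := Reachable.nonempty_neighborSet_left
    (u := (⟨u, huw.ne⟩ : ({w}ᶜ : Set V))) (v := ⟨t, ht.2⟩)
    (fun h => ht.1 (congrArg Subtype.val h).symm) ((hG.2 {w} (by simp)).preconnected _ _)
  replace huz : G.Adj u z := huz
  obtain ⟨S, hS, -, hSu⟩ := ((hG.2 {u} (by simp)).preconnected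
    (⟨z, huz.ne.symm⟩ : ({u}ᶜ : Set V)) ⟨w, huw.ne.symm⟩).exists_isPath_of_induce
  refine ⟨.cons huz S, .cons huw .nil, (Walk.cons_isPath_iff _ _).mpr ⟨hS, fun h => hSu u h rfl⟩,
    by simp [huw.ne], fun y _ hy => by simpa using hy, ?_⟩
  have : S.length ≠ 0 := fun h => hzw (Walk.eq_of_length_eq_zero h)
  simp only [Walk.length_cons]
  omega

theorem KConnected.exists_internallyDisjoint_paths [Fintype V] (hG : KConnected 2 G) {u w : V}
    (huw : u ≠ w) : ∃ P Q : G.Walk u w, P.IsPath ∧ Q.IsPath ∧ P.InternallyDisjoint Q ∧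
      (1 < P.length ∨ 1 < Q.length) := by
  have hconn := hG.connected two_pos
  obtain ⟨n, hn⟩ : ∃ n, G.dist u w = n + 1 :=
    ⟨_, (Nat.succ_pred_eq_of_pos (hconn.pos_dist_of_ne huw)).symm⟩
  induction n generalizing w with
  | zero =>
    obtain ⟨P, Q, hP, hQ, hPQ, hlen⟩ :=
      hG.exists_internallyDisjoint_paths_of_adj (dist_eq_one_iff_adj.mp hn)
    exact ⟨P, Q, hP, hQ, hPQ, Or.inl hlen⟩
  | succ n ih =>
    obtain ⟨w', hww', hdist⟩ := hconn.exists_adj_dist_eq_add_one huw.symm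
    have huw' : u ≠ w' := fun h => by rw [← h, dist_self] at hdist; omega
    obtain ⟨P, Q, hP, hQ, hPQ, -⟩ := ih huw' (by omega)
    obtain ⟨R₀, hR₀, -, hR₀w'⟩ := ((hG.2 {w'} (by simp)).preconnected
      (⟨w, hww'.ne⟩ : ({w'}ᶜ : Set V)) ⟨u, huw'⟩).exists_isPath_of_induce
    obtain ⟨x, hx, R, hR, hRsub, hRfirst⟩ := R₀.exists_isPath_to_first_mem
      {y | y ∈ P.support ∨ y ∈ Q.support} hR₀ (Or.inl P.start_mem_support)
    have hw'R : w' ∉ R.support := fun h => hR₀w' w' (hRsub w' h) rfl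
    rcases hx with hxP | hxQ
    · obtain ⟨P', Q', hP', hQ', hP'Q', hlen⟩ :=
        hPQ.exists_extend hP hQ huw' huw.symm hww'.symm hR hxP hw'R hRfirst
      exact ⟨P', Q', hP', hQ', hP'Q', Or.inr hlen⟩
    · obtain ⟨P', Q', hP', hQ', hP'Q', hlen⟩ := hPQ.symm.exists_extend hQ hP huw' huw.symm
        hww'.symm hR hxQ hw'R fun y hy h => hRfirst y hy h.symm
      exact ⟨Q', P', hQ', hP', hP'Q'.symm, Or.inl hlen⟩

/-! ### Breadth-first search trees -/

namespace SimpleGraph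

variable {H : SimpleGraph W} {a : W} {p : W → W}

def IsBFSParent (H : SimpleGraph W) (a : W) (p : W → W) : Prop :=
  p a = a ∧ ∀ x, x ≠ a → H.Adj x (p x) ∧ H.dist a (p x) + 1 = H.dist a x

lemma Connected.exists_isBFSParent (hH : H.Connected) (a : W) : ∃ p, IsBFSParent H a p := by
  classical
  choose! q hq using fun x (hx : x ≠ a) => hH.exists_adj_dist_eq_add_one hx
  exact ⟨fun x => if x = a then a else q x, by simp, fun x hx => by simpa [hx] using hq x hx⟩

def descendants (p : W → W) (c : W) : Set W := {x | ∃ k, p^[k] x = c}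

lemma self_mem_descendants (c : W) : c ∈ descendants p c := ⟨0, rfl⟩

lemma descendants_subset_descendants_apply (c : W) : descendants p c ⊆ descendants p (p c) :=
  fun _ ⟨k, hk⟩ => ⟨k + 1, by rw [iterate_succ_apply', hk]⟩

namespace IsBFSParent

lemma adj_apply (hp : IsBFSParent H a p) {x : W} (hx : x ≠ a) : H.Adj x (p x) := (hp.2 x hx).1

lemma dist_apply_add_one (hp : IsBFSParent H a p) {x : W} (hx : x ≠ a) :
    H.dist a (p x) + 1 = H.dist a x :=
  (hp.2 x hx).2

lemma dist_apply (hp : IsBFSParent H a p) (x : W) : H.dist a (p x) = H.dist a x - 1 := by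
  by_cases hx : x = a
  · simp [hx, hp.1]
  · have := hp.dist_apply_add_one hx
    omega

lemma dist_iterate (hp : IsBFSParent H a p) (k : ℕ) (x : W) :
    H.dist a (p^[k] x) = H.dist a x - k := by
  induction k generalizing x with
  | zero => rfl
  | succ k ih => rw [iterate_succ_apply, ih, hp.dist_apply]; omega

lemma dist_pos (hp : IsBFSParent H a p) {x : W} (hx : x ≠ a) : 0 < H.dist a x := by
  have := hp.dist_apply_add_one hx
  omega

lemma dist_le_of_mem_descendants (hp : IsBFSParent H a p) {c x : W} (hx : x ∈ descendants p c) :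
    H.dist a c ≤ H.dist a x := by
  obtain ⟨k, rfl⟩ := hx
  rw [hp.dist_iterate]
  omega

lemma disjoint_descendants (hp : IsBFSParent H a p) {c₁ c₂ : W} (hc₁ : c₁ ≠ a)
    (hd : H.dist a c₁ = H.dist a c₂) (hne : c₁ ≠ c₂) :
    Disjoint (descendants p c₁) (descendants p c₂) := by
  refine Set.disjoint_left.mpr fun x ⟨k₁, hk₁⟩ ⟨k₂, hk₂⟩ => hne ?_
  have h₁ := hp.dist_iterate k₁ x
  have h₂ := hp.dist_iterate k₂ x
  have := hp.dist_pos hc₁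
  rw [hk₁] at h₁
  rw [hk₂] at h₂
  obtain rfl : k₁ = k₂ := by omega
  exact hk₁.symm.trans hk₂

lemma connected_induce_descendants (hp : IsBFSParent H a p) (c : W) :
    (H.induce (descendants p c)).Connected := by
  rw [connected_iff_exists_forall_reachable]
  refine ⟨⟨c, self_mem_descendants c⟩, ?_⟩
  rintro ⟨x, k, hk⟩
  induction k generalizing x with
  | zero => subst hk; rfl
  | succ k ih =>
    rw [iterate_succ_apply] at hk
    refine (ih (p x) hk).trans ?_
    by_cases hx : x = a
    · subst hx
      simp only [hp.1]
      rfl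
    · exact Adj.reachable (by simpa using (hp.adj_apply hx).symm)

lemma card_le_sum_pow [Fintype W] (hp : IsBFSParent H a p) (A : Finset W) (b ℓ : ℕ)
    (hA : ∀ x ∈ A, H.dist a x ≤ ℓ)
    (hb : ∀ u (C : Finset W), (∀ c ∈ C, c ≠ a ∧ p c = u ∧ ∃ x ∈ A, x ∈ descendants p c) →
      C.card ≤ b) :
    A.card ≤ ∑ i ∈ Finset.range (ℓ + 1), b ^ i := by
  classical
  let M (i : ℕ) : Finset W :=
    Finset.univ.filter fun c => H.dist a c = i ∧ ∃ x ∈ A, x ∈ descendants p c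
  have hM0 : (M 0).card ≤ 1 := Finset.card_le_one.mpr fun x hx y hy => by
    simp only [M, Finset.mem_filter] at hx hy
    by_contra hxy
    rcases eq_or_ne x a with rfl | hx'
    · exact (hp.dist_pos (Ne.symm hxy)).ne' hy.2.1
    · exact (hp.dist_pos hx').ne' hx.2.1
  have hMsucc (i : ℕ) : (M (i + 1)).card ≤ b * (M i).card := by
    have hne : ∀ c ∈ M (i + 1), c ≠ a := fun c hc h => by simp [M, h] at hc
    calc (M (i + 1)).card ≤ b * ((M (i + 1)).image p).card :=
          Finset.card_le_mul_card_image _ _ fun u _ => hb u _ fun c hc => by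
            simp only [Finset.mem_filter, M] at hc
            exact ⟨hne c (by simpa [M] using hc.1), hc.2, hc.1.2.2⟩
      _ ≤ b * (M i).card := by
          refine Nat.mul_le_mul_left _ (Finset.card_le_card fun u hu => ?_)
          obtain ⟨c, hc, rfl⟩ := Finset.mem_image.mp hu
          simp only [M, Finset.mem_filter, Finset.mem_univ, true_and] at hc ⊢
          obtain ⟨hdc, x, hxA, hx⟩ := hc
          exact ⟨by rw [hp.dist_apply, hdc]; rfl, x, hxA, descendants_subset_descendants_apply c hx⟩
  have hM (i : ℕ) : (M i).card ≤ b ^ i := by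
    induction i with
    | zero => simpa using hM0
    | succ i ih => exact (hMsucc i).trans (by rw [pow_succ']; exact Nat.mul_le_mul_left _ ih)
  calc A.card ≤ ((Finset.range (ℓ + 1)).biUnion M).card := Finset.card_le_card fun x hx =>
        Finset.mem_biUnion.mpr ⟨H.dist a x, by simpa [Nat.lt_succ_iff] using hA x hx,
          by simpa [M] using ⟨x, hx, self_mem_descendants x⟩⟩
    _ ≤ ∑ i ∈ Finset.range (ℓ + 1), (M i).card := Finset.card_biUnion_le
    _ ≤ ∑ i ∈ Finset.range (ℓ + 1), b ^ i := Finset.sum_le_sum fun i _ => hM i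

lemma exists_far_or_exists_branching [Fintype W] (hp : IsBFSParent H a p) (A : Finset W)
    {b ℓ : ℕ} (hA : ∑ i ∈ Finset.range (ℓ + 1), b ^ i < A.card) :
    (∃ x ∈ A, ℓ < H.dist a x) ∨ ∃ (u : W) (C : Finset W), b < C.card ∧
      ∀ c ∈ C, c ≠ a ∧ p c = u ∧ ∃ x ∈ A, x ∈ descendants p c := by
  refine or_iff_not_imp_left.mpr fun hfar => by_contra fun hbranch => hA.not_ge ?_
  push Not at hfar
  exact hp.card_le_sum_pow A b ℓ hfar fun u C hC => not_lt.mp fun hb => hbranch ⟨u, C, hb, hC⟩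

end IsBFSParent

end SimpleGraph

/-! ### Large 2-connected graphs -/

theorem hasMinor_cycleGraph_of_far_neighbors [Finite V] (hG : G.Connected) {u : V}
    {a x : ({u}ᶜ : Set V)} (ha : G.Adj u a) (hx : G.Adj u x) {r : ℕ} (hr : 3 ≤ r)
    (hdist : r - 1 ≤ (G.induce {u}ᶜ).dist a x) : HasMinor G (cycleGraph r) := by
  obtain ⟨P, hP, hPlen, hPu⟩ :=
    (Reachable.of_dist_ne_zero (by omega : (G.induce {u}ᶜ).dist a x ≠ 0)).exists_isPath_of_induce
  have hax : (a : V) ≠ x := fun h => by rw [Subtype.ext h, dist_self] at hdist; omega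
  refine (hP.isCycle_cons_concat (fun h => hPu u h rfl) hax ha hx.symm).hasMinor_cycleGraph hG hr ?_
  simp only [Walk.length_cons, Walk.length_concat]
  omega

theorem hasMinor_completeBipartiteGraph_of_branching [Finite V] (hG : G.Connected) {u : V}
    {a v : ({u}ᶜ : Set V)} {p : ({u}ᶜ : Set V) → ({u}ᶜ : Set V)}
    (hp : IsBFSParent (G.induce {u}ᶜ) a p) {r : ℕ} (C : Finset ({u}ᶜ : Set V)) (hC : r ≤ C.card)
    (hCv : ∀ c ∈ C, c ≠ a ∧ p c = v ∧ ∃ x ∈ descendants p c, G.Adj u x) :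
    HasMinor G (completeBipartiteGraph (Fin 2) (Fin r)) := by
  let e (i : Fin r) : ({u}ᶜ : Set V) := C.equivFin.symm (Fin.castLE hC i)
  have he : Injective e :=
    Subtype.val_injective.comp (C.equivFin.symm.injective.comp (Fin.castLE_injective hC))
  have heC (i : Fin r) : e i ∈ C := (C.equivFin.symm _).2
  have hdist (i : Fin r) : (G.induce {u}ᶜ).dist a (e i) = (G.induce {u}ᶜ).dist a v + 1 := by
    obtain ⟨hne, hpe, -⟩ := hCv _ (heC i)
    rw [← hpe, hp.dist_apply_add_one hne]
  have hvu : (v : V) ≠ u := v.2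
  refine hasMinor_completeBipartiteGraph hG ![u, v] ?_ (fun i => Subtype.val '' descendants p (e i))
    (fun i j hij => ?_) (fun i => connected_induce_image_val (hp.connected_induce_descendants _))
    ?_ ?_
  · intro i j hij
    fin_cases i <;> fin_cases j <;> simp_all [eq_comm]
  · exact (Set.disjoint_image_iff Subtype.val_injective).mpr <| hp.disjoint_descendants
      (hCv _ (heC i)).1 ((hdist i).trans (hdist j).symm) (he.ne hij)
  · intro k i
    fin_cases k
    · rintro ⟨y, -, hy⟩
      exact y.2 hy
    · rintro ⟨y, hy, hyv⟩
      have := hp.dist_le_of_mem_descendants hy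
      rw [Subtype.ext hyv, hdist i] at this
      omega
  · intro k i
    obtain ⟨hne, hpe, x, hx, hux⟩ := hCv _ (heC i)
    fin_cases k
    · exact ⟨x, ⟨x, hx, rfl⟩, hux⟩
    · refine ⟨e i, ⟨e i, self_mem_descendants _, rfl⟩, ?_⟩
      exact hpe ▸ (hp.adj_apply hne).symm

theorem KConnected.hasMinor_cycleGraph_or_exists_many_neighbors [Fintype V] (hG : KConnected 2 G)
    {r : ℕ} (hr : 3 ≤ r) (b : ℕ) (hV : ∑ i ∈ Finset.range (r - 1), b ^ i < Fintype.card V) :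
    HasMinor G (cycleGraph r) ∨ ∃ (u : V) (A : Finset V), b < A.card ∧ ∀ x ∈ A, G.Adj u x := by
  have hconn := hG.connected two_pos
  obtain ⟨a⟩ := hconn.nonempty
  obtain ⟨p, hp⟩ := hconn.exists_isBFSParent a
  rcases hp.exists_far_or_exists_branching Finset.univ (ℓ := r - 2)
    (by rwa [show r - 2 + 1 = r - 1 by omega, Finset.card_univ]) with ⟨x, -, hx⟩ | ⟨u, C, hC, hCu⟩
  · have hax : a ≠ x := by rintro rfl; rw [dist_self] at hx; omega
    obtain ⟨P, Q, hP, hQ, hPQ, hlen⟩ := hG.exists_internallyDisjoint_paths hax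
    refine Or.inl ((hP.isCycle_append_reverse hQ hPQ hlen).hasMinor_cycleGraph hconn hr ?_)
    have := dist_le P
    have : Q.length ≠ 0 := fun h => hax (Walk.eq_of_length_eq_zero h)
    simp only [Walk.length_append, Walk.length_reverse]
    omega
  · refine Or.inr ⟨u, C, hC, fun c hc => ?_⟩
    obtain ⟨hca, rfl, -⟩ := hCu c hc
    exact (hp.adj_apply hca).symm

theorem KConnected.hasMinor_cycleGraph_or_completeBipartiteGraph [Fintype V]
    (hG : KConnected 2 G) {r : ℕ} (hr : 3 ≤ r) {u : V} (A : Finset V) (hA : ∀ x ∈ A, G.Adj u x)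
    (hcard : ∑ i ∈ Finset.range (r - 1), (r - 1) ^ i < A.card) :
    HasMinor G (cycleGraph r) ∨ HasMinor G (completeBipartiteGraph (Fin 2) (Fin r)) := by
  classical
  have hconn := hG.connected two_pos
  let A' : Finset ({u}ᶜ : Set V) := A.subtype (· ∈ ({u}ᶜ : Set V))
  have hA' : A'.card = A.card := by
    rw [Finset.card_subtype,
      Finset.filter_true_of_mem fun x hx => show x ∈ ({u}ᶜ : Set V) from (hA x hx).ne']
  have hA'u : ∀ x ∈ A', G.Adj u x := fun x hx => hA x (Finset.mem_subtype.mp hx)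
  obtain ⟨a, ha⟩ : A'.Nonempty := Finset.card_pos.mp (by omega)
  obtain ⟨p, hp⟩ := (hG.2 {u} (by simp)).exists_isBFSParent a
  rcases hp.exists_far_or_exists_branching A' (b := r - 1) (ℓ := r - 2)
    (by rwa [show r - 2 + 1 = r - 1 by omega, hA']) with ⟨x, hx, hdist⟩ | ⟨v, C, hC, hCv⟩
  · exact Or.inl (hasMinor_cycleGraph_of_far_neighbors hconn (hA'u a ha) (hA'u x hx) hr
      (by omega))
  · refine Or.inr (hasMinor_completeBipartiteGraph_of_branching (v := v) hconn hp C (by omega)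
      fun c hc => ?_)
    obtain ⟨hca, hpc, x, hxA, hx⟩ := hCv c hc
    exact ⟨hca, hpc, x, hx, hA'u x hxA⟩

/-- Every sufficiently large 2-connected graph contains a minor isomorphic to the cycle `C_r`
or to the complete bipartite graph `K_{2,r}`. -/
theorem two_connected_contains_cycle_or_K2r (r : ℕ) (hr : 2 < r) :
    ∃ N : ℕ, ∀ (V : Type) [Fintype V] (G : SimpleGraph V),
      KConnected 2 G → N ≤ Fintype.card V →
      HasMinor G (SimpleGraph.cycleGraph r) ∨
      HasMinor G (completeBipartiteGraph (Fin 2) (Fin r)) := by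
  let b := ∑ i ∈ Finset.range (r - 1), (r - 1) ^ i
  refine ⟨∑ i ∈ Finset.range (r - 1), b ^ i + 1, fun V _ G hG hV => ?_⟩
  obtain hcycle | ⟨u, A, hA, hAu⟩ := hG.hasMinor_cycleGraph_or_exists_many_neighbors hr b (by omega)
  · exact Or.inl hcycle
  · exact hG.hasMinor_cycleGraph_or_completeBipartiteGraph hr A hAu hA
end
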